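/- arXiv:1905.09503 — 6 statements merged into one kernel-verified Lean document; each statement's English description precedes it below -/
import Mathlib

section
/- Output hiding preserves refinement: if A ⪯ B then ohide A ⪯ ohide B, where hiding the second output component of an interface with output type O₁ × O₂ is defined by (ohide F) i o₁ ↔ ∃ o₂, F i (o₁, o₂). -/
def NB {I O : Type*} (F : I → O → Prop) (i : I) : Prop := ∃ o, F i o

def Refines {I O : Type*} (Fh F : I → O → Prop) : Prop :=
  (∀ i, NB Fh i → NB F i) ∧ (∀ i o, NB Fh i → F i o → Fh i o)

def ohide {I O₁ O₂ : Type*} (F : I → (O₁ × O₂) → Prop) : I → O₁ → Prop :=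
  fun i o₁ => ∃ o₂, F i (o₁, o₂)

theorem ohide_preserves_refinement {I O₁ O₂ : Type*}
    (A B : I → (O₁ × O₂) → Prop) (h : Refines A B) :
    Refines (ohide A) (ohide B) := by
  obtain ⟨h1, h2⟩ := h
  constructor
  · rintro i ⟨o₁, o₂, hA⟩
    obtain ⟨⟨p₁, p₂⟩, hB⟩ := h1 i ⟨(o₁, o₂), hA⟩
    exact ⟨p₁, p₂, hB⟩
  · rintro i o₁ ⟨p₁, p₂, hA⟩ ⟨o₂, hB⟩
    exact ⟨o₂, h2 i (o₁, o₂) ⟨(p₁, p₂), hA⟩ hB⟩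
end

section
/- Series composition preserves refinement: if Â₁ ⪯ A₁ and Â₂ ⪯ A₂, then comp Â₁ Â₂ ⪯ comp A₁ A₂. -/
def comp {I M O : Type*} (F₁ : I → M → Prop) (F₂ : M → O → Prop) :
    I → (M × O) → Prop :=
  fun i mo => F₁ i mo.1 ∧ F₂ mo.1 mo.2 ∧ ∀ m', F₁ i m' → NB F₂ m'

theorem comp_preserves_refinement {I M O : Type*}
    (Ah A : I → M → Prop) (Bh B : M → O → Prop)
    (hA : Refines Ah A) (hB : Refines Bh B) :
    Refines (comp Ah Bh) (comp A B) := by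
  constructor
  · rintro i ⟨⟨m, o⟩, hAhm, hBh, hall⟩
    have hNBAh : NB Ah i := ⟨m, hAhm⟩
    obtain ⟨m₀, hAm₀⟩ := hA.1 i hNBAh
    have hAhm₀ : Ah i m₀ := hA.2 i m₀ hNBAh hAm₀
    obtain ⟨o₀, hB₀⟩ := hB.1 m₀ (hall m₀ hAhm₀)
    refine ⟨(m₀, o₀), hAm₀, hB₀, ?_⟩
    intro m'' hAm''
    exact hB.1 m'' (hall m'' (hA.2 i m'' hNBAh hAm''))
  · rintro i ⟨m, o⟩ ⟨⟨m₁, o₁⟩, hAhm₁, hBh₁, hall⟩ ⟨hAm, hBm, _⟩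
    have hNBAh : NB Ah i := ⟨m₁, hAhm₁⟩
    have hAhm : Ah i m := hA.2 i m hNBAh hAm
    exact ⟨hAhm, hB.2 m o (hall m hAhm) hBm, hall⟩
end

section
/- The series composition of two quantizers, after hiding the intermediate variable, is again a quantizer: if Q₁ ⪯ Id and Q₂ ⪯ Id (both on type A), then the interface R a c ↔ (∃ b, Q₁ a b ∧ Q₂ b c) ∧ (∀ b, Q₁ a b → NB Q₂ b) satisfies R ⪯ Id. -/
theorem quantizer_comp {A : Type*} (Q₁ Q₂ : A → A → Prop)
    (h₁ : Refines Q₁ (fun a a' => a = a'))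
    (h₂ : Refines Q₂ (fun a a' => a = a')) :
    Refines (fun a c => (∃ b, Q₁ a b ∧ Q₂ b c) ∧ (∀ b, Q₁ a b → NB Q₂ b))
      (fun a a' => a = a') := by
  constructor
  · intro a _; exact ⟨a, rfl⟩
  · rintro a o ⟨c, ⟨b, hb, hbc⟩, hall⟩ rfl
    have hQ1aa : Q₁ a a := h₁.2 a a ⟨b, hb⟩ rfl
    have hQ2aa : Q₂ a a := h₂.2 a a (hall a hQ1aa) rfl
    exact ⟨⟨a, hQ1aa, hQ2aa⟩, hall⟩
end

section
/- Input coarsening yields an abstraction: for any interface F : A → O → Prop and any quantizer Q ⪯ Id on A, the coarsened interface G â o ↔ (∃ a, Q â a ∧ F a o) ∧ (∀ a, Q â a → NB F a) satisfies G ⪯ F. -/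
theorem icoarsen_abstracts {A O : Type*} (F : A → O → Prop) (Q : A → A → Prop)
    (hQ : Refines Q (fun a a' => a = a')) :
    Refines (fun ah o => (∃ a, Q ah a ∧ F a o) ∧ (∀ a, Q ah a → NB F a)) F := by
  constructor
  · rintro ah ⟨o, ⟨a, hQa, _⟩, hall⟩
    exact hall ah (hQ.2 ah ah ⟨a, hQa⟩ rfl)
  · rintro ah o ⟨o', ⟨a, hQa, _⟩, hall⟩ hF
    exact ⟨⟨ah, hQ.2 ah ah ⟨a, hQa⟩ rfl, hF⟩, hall⟩
end

section
/- If F₁ and F₂ are shared refinable, then refine(F₁, F₂) is an upper bound of both in the refinement order: F₁ ⪯ refine(F₁, F₂) and F₂ ⪯ refine(F₁, F₂). -/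
def refine {I O : Type*} (F₁ F₂ : I → O → Prop) : I → O → Prop :=
  fun i o => (NB F₁ i ∨ NB F₂ i) ∧ (NB F₁ i → F₁ i o) ∧ (NB F₂ i → F₂ i o)

theorem refine_upper_bound {I O : Type*} (F₁ F₂ : I → O → Prop)
    (h : ∀ i, NB F₁ i → NB F₂ i → ∃ o, F₁ i o ∧ F₂ i o) :
    Refines F₁ (refine F₁ F₂) ∧ Refines F₂ (refine F₁ F₂) := by
  constructor
  · constructor
    · intro i h1
      by_cases h2 : NB F₂ i
      · obtain ⟨o, ho1, ho2⟩ := h i h1 h2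
        exact ⟨o, Or.inl h1, fun _ => ho1, fun _ => ho2⟩
      · obtain ⟨o, ho⟩ := h1
        exact ⟨o, Or.inl ⟨o, ho⟩, fun _ => ho, fun hc => absurd hc h2⟩
    · intro i o h1 hr
      exact hr.2.1 h1
  · constructor
    · intro i h2
      by_cases h1 : NB F₁ i
      · obtain ⟨o, ho1, ho2⟩ := h i h1 h2
        exact ⟨o, Or.inl h1, fun _ => ho1, fun _ => ho2⟩
      · obtain ⟨o, ho⟩ := h2
        exact ⟨o, Or.inr ⟨o, ho⟩, fun hc => absurd hc h1, fun _ => ho⟩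
    · intro i o h2 hr
      exact hr.2.2 h2
end

section
/- The shared refinement is the least upper bound: if F₁ ⪯ G and F₂ ⪯ G, then F₁ and F₂ are shared refinable and refine(F₁, F₂) ⪯ G. -/
theorem refine_lub {I O : Type*} (F₁ F₂ G : I → O → Prop)
    (h₁ : Refines F₁ G) (h₂ : Refines F₂ G) :
    (∀ i, NB F₁ i → NB F₂ i → ∃ o, F₁ i o ∧ F₂ i o) ∧
    Refines (refine F₁ F₂) G := by
  constructor
  · intro i hn1 hn2
    obtain ⟨o, ho⟩ := h₁.1 i hn1
    exact ⟨o, h₁.2 i o hn1 ho, h₂.2 i o hn2 ho⟩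
  · constructor
    · rintro i ⟨o, hd, -⟩
      rcases hd with h | h
      · exact h₁.1 i h
      · exact h₂.1 i h
    · rintro i o ⟨o', hd, -⟩ hG
      exact ⟨hd, fun h => h₁.2 i o h hG, fun h => h₂.2 i o h hG⟩
end
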